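/- arXiv:1505.06444 — 4 statements merged into one kernel-verified Lean document; each statement's English description precedes it below -/
import Mathlib

section
/- Let S be a d-dimensional simplex in ℝ^d with centroid at the origin. Then #(S ∩ ℤ^d) ≤ C(d + ⌈λ₁(S)⁻¹·(d+1)⌉, d), where C(n,k) denotes the binomial coefficient and λ₁(S) = min{λ > 0 : λS ∩ ℤ^d ≠ {0}} is the first successive minimum of S. -/
/-!
Write `c₀, …, c_d` for the barycentric coordinates of the simplex `S`. By the symmetry of `S`
under the affine involutions swapping two vertices, the centroid of `S` is the centroid of its
vertices, so `cᵢ 0 = 1/(d+1)` for all `i`. If `x ≠ y` are lattice points of `S` and `t` is the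
largest increase `cᵢ y - cᵢ x`, then the nonzero lattice point `x - y` lies in `(d+1)t • S`, so
`t ≥ ε := λ₁/(d+1)`. Hence the map `x ↦ (⌊cᵢ x / ε⌋)_{i<d}` is injective on `S ∩ ℤ^d`: two points
with the same image differ by less than `ε` in the first `d` coordinates, so `c_d` would have to
increase by `ε` both from `x` to `y` and from `y` to `x`. Its values are tuples of `d` naturals
with sum at most `⌈(d+1)/λ₁⌉`, of which there are `C(d + ⌈(d+1)/λ₁⌉, d)`.
-/

open MeasureTheory Set Pointwise

/-- The set of integer lattice points of `ℝ^d`. -/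
def latticePts (d : ℕ) : Set (Fin d → ℝ) := {x | ∀ i, ∃ z : ℤ, x i = (z : ℝ)}

theorem ncard_le_choose_of_sum_le {d k : ℕ} {s : Set (Fin d → ℕ)}
    (hs : ∀ m ∈ s, ∑ i, m i ≤ k) :
    s.ncard ≤ (d + k).choose d := by
  let t : Set (Fin (d + 1) → ℕ) := {P | ∑ i, P i = k}
  let e : t ≃ Sym (Fin (d + 1)) k := (Sym.equivNatSumOfFintype (Fin (d + 1)) k).symm
  have ht : Nat.card t = (d + k).choose d := by
    rw [Nat.card_congr e, Nat.card_eq_fintype_card, Sym.card_sym_eq_choose, Fintype.card_fin,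
      Nat.add_right_comm, Nat.add_sub_cancel, Nat.choose_symm_add]
  have : Finite t := Finite.of_equiv _ e.symm
  calc s.ncard ≤ t.ncard := by
        refine Set.ncard_le_ncard_of_injOn (fun m => Fin.snoc m (k - ∑ i, m i)) ?_ ?_
          (Set.toFinite t)
        · intro m hm
          simp [t, Fin.sum_univ_castSucc, Nat.add_sub_cancel' (hs m hm)]
        · intro m _ m' _ h
          simpa using congrArg Fin.init h
    _ = (d + k).choose d := by rw [← Nat.card_coe_set_eq, ht]

theorem abs_sub_lt_one_of_natFloor_eq_natFloor {R : Type*} [Field R] [LinearOrder R]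
    [IsStrictOrderedRing R] [FloorSemiring R] {a b : R} (ha : 0 ≤ a) (hb : 0 ≤ b)
    (h : ⌊a⌋₊ = ⌊b⌋₊) : |a - b| < 1 := by
  have ha₁ := Nat.floor_le ha
  have hb₁ := Nat.floor_le hb
  have ha₂ := Nat.lt_floor_add_one a
  have hb₂ := Nat.lt_floor_add_one b
  rw [h] at ha₁ ha₂
  rw [abs_sub_lt_iff]
  constructor <;> linarith

theorem injOn_natFloor_castSucc {α : Type*} {n : ℕ} {s : Set α} {w : α → Fin (n + 1) → ℝ}
    {ε : ℝ} (hε : 0 < ε) (hw : ∀ x ∈ s, ∀ i, 0 ≤ w x i)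
    (hsep : ∀ x ∈ s, ∀ y ∈ s, x ≠ y → ∃ i, ε ≤ w y i - w x i) :
    InjOn (fun x (i : Fin n) => ⌊w x i.castSucc / ε⌋₊) s := by
  intro x hx y hy hxy
  by_contra hne
  have close (i : Fin n) : |w y i.castSucc - w x i.castSucc| < ε := by
    have := abs_sub_lt_one_of_natFloor_eq_natFloor (div_nonneg (hw y hy _) hε.le)
      (div_nonneg (hw x hx _) hε.le) (congrFun hxy i).symm
    rwa [← sub_div, abs_div, abs_of_pos hε, div_lt_one hε] at this
  obtain ⟨i, hi⟩ := hsep x hx y hy hne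
  obtain ⟨j, hj⟩ := hsep y hy x hx (Ne.symm hne)
  rcases Fin.eq_castSucc_or_eq_last i with ⟨i, rfl⟩ | rfl
  · exact hi.not_gt (abs_sub_lt_iff.1 (close i)).1
  rcases Fin.eq_castSucc_or_eq_last j with ⟨j, rfl⟩ | rfl
  · exact hj.not_gt (abs_sub_lt_iff.1 (close j)).2
  linarith

theorem sum_natFloor_castSucc_le {n : ℕ} {w : Fin (n + 1) → ℝ} {ε : ℝ} (hε : 0 < ε)
    (hw₀ : ∀ i, 0 ≤ w i) (hw₁ : ∑ i, w i = 1) :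
    ∑ i : Fin n, ⌊w i.castSucc / ε⌋₊ ≤ ⌈ε⁻¹⌉₊ := by
  have : ((∑ i : Fin n, ⌊w i.castSucc / ε⌋₊ : ℕ) : ℝ) ≤ ε⁻¹ := by
    push_cast
    calc ∑ i : Fin n, (⌊w i.castSucc / ε⌋₊ : ℝ)
        ≤ ∑ i : Fin n, w i.castSucc / ε :=
          Finset.sum_le_sum fun i _ => Nat.floor_le (div_nonneg (hw₀ _) hε.le)
      _ = (∑ i : Fin n, w i.castSucc) / ε := (Finset.sum_div ..).symm
      _ ≤ 1 / ε := by
          gcongr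
          rw [Fin.sum_univ_castSucc] at hw₁
          linarith [hw₀ (Fin.last n)]
      _ = ε⁻¹ := one_div ε
  exact_mod_cast this.trans (Nat.le_ceil _)

theorem ncard_le_choose_of_separated {α : Type*} {n : ℕ} {s : Set α}
    (w : α → Fin (n + 1) → ℝ) {ε : ℝ} (hε : 0 < ε) (hw₀ : ∀ x ∈ s, ∀ i, 0 ≤ w x i)
    (hw₁ : ∀ x ∈ s, ∑ i, w x i = 1)
    (hsep : ∀ x ∈ s, ∀ y ∈ s, x ≠ y → ∃ i, ε ≤ w y i - w x i) :
    s.ncard ≤ (n + ⌈ε⁻¹⌉₊).choose n := by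
  rw [← (injOn_natFloor_castSucc hε hw₀ hsep).ncard_image]
  refine ncard_le_choose_of_sum_le ?_
  rintro _ ⟨x, hx, rfl⟩
  exact sum_natFloor_castSucc_le hε (hw₀ x hx) (hw₁ x hx)

theorem AffineMap.map_smul_sub {k V W : Type*} [Ring k] [AddCommGroup V] [Module k V]
    [AddCommGroup W] [Module k W] (f : V →ᵃ[k] W) (t : k) (x y : V) :
    f (t • (x - y)) = t • (f x - f y) + f 0 := by
  calc f (t • (x - y)) = f (t • (x -ᵥ y) +ᵥ (0 : V)) := by
        rw [vadd_eq_add, add_zero, vsub_eq_sub]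
    _ = f.linear (t • (x -ᵥ y)) + f 0 := f.map_vadd 0 _
    _ = t • (f x - f y) + f 0 := by rw [map_smul, f.linearMap_vsub, vsub_eq_sub]

namespace AffineBasis

theorem exists_affineMap_coord_apply {ι k V P : Type*} [Fintype ι] [Ring k] [AddCommGroup V]
    [Module k V] [AddTorsor V P] (b : AffineBasis ι k P) (σ : Equiv.Perm ι) :
    ∃ T : P →ᵃ[k] P, ∀ i x, b.coord i (T x) = b.coord (σ i) x := by
  classical
  refine ⟨(Finset.univ.affineCombination k b).comp
    ((LinearMap.funLeft k k σ).toAffineMap.comp b.coords), fun i x => ?_⟩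
  have hw : ∑ j, b.coords x (σ j) = 1 := by
    rw [Equiv.sum_comp σ (b.coords x)]
    exact b.sum_coord_apply_eq_one x
  exact b.coord_apply_combination_of_mem (Finset.mem_univ i) hw

section

variable {ι E : Type*} [AddCommGroup E] [Module ℝ E]

theorem sub_mem_smul_convexHull (b : AffineBasis ι ℝ E) {c t : ℝ} (hc : 0 < c) (ht : 0 < t)
    (h₀ : ∀ i, c ≤ b.coord i 0) {x y : E} (hxy : ∀ i, b.coord i y - b.coord i x ≤ t) :
    x - y ∈ (t / c) • convexHull ℝ (range b) := by
  rw [mem_smul_set_iff_inv_smul_mem₀ (div_pos ht hc).ne', b.convexHull_eq_nonneg_coord]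
  intro i
  have hdiff : c / t * (b.coord i y - b.coord i x) ≤ c := by
    calc c / t * (b.coord i y - b.coord i x) ≤ c / t * t := by gcongr; exact hxy i
      _ = c := div_mul_cancel₀ c ht.ne'
  rw [AffineMap.map_smul_sub, inv_div, smul_eq_mul]
  linarith [h₀ i]

theorem exists_le_coord_sub [Fintype ι] (b : AffineBasis ι ℝ E) {c l : ℝ} (hc : 0 < c)
    (h₀ : ∀ i, c ≤ b.coord i 0) {x y : E} (hxy : x ≠ y)
    (hl : ∀ t > 0, x - y ∈ t • convexHull ℝ (range b) → l ≤ t) :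
    ∃ i, c * l ≤ b.coord i y - b.coord i x := by
  have := b.nonempty
  obtain ⟨i, hi⟩ := Finite.exists_max fun i => b.coord i y - b.coord i x
  refine ⟨i, ?_⟩
  have hpos : 0 < b.coord i y - b.coord i x := by
    by_contra! hle
    have hsum : ∑ j, (b.coord j y - b.coord j x) = 0 := by
      simp only [Finset.sum_sub_distrib, sum_coord_apply_eq_one, sub_self]
    have hzero := Finset.sum_eq_zero_iff_of_nonpos (fun j _ => (hi j).trans hle) |>.1 hsum
    exact hxy (b.ext_elem fun j => by linarith [hzero j (Finset.mem_univ j)])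
  have := hl _ (div_pos hpos hc) (b.sub_mem_smul_convexHull hc hpos h₀ hi)
  rwa [le_div_iff₀ hc, mul_comm] at this

end

end AffineBasis

theorem AffineMap.apply_average {α E F : Type*} [MeasurableSpace α] {ν : Measure α}
    [IsFiniteMeasure ν] [NeZero ν] [NormedAddCommGroup E] [NormedSpace ℝ E] [CompleteSpace E]
    [FiniteDimensional ℝ E] [NormedAddCommGroup F] [NormedSpace ℝ F] [CompleteSpace F]
    (f : E →ᵃ[ℝ] F) {φ : α → E} (hφ : Integrable φ ν) :
    f (⨍ x, φ x ∂ν) = ⨍ x, f (φ x) ∂ν := by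
  let L : E →L[ℝ] F := LinearMap.toContinuousLinearMap f.linear
  have hφ' : Integrable φ ((ν univ)⁻¹ • ν) := hφ.smul_measure (by simp [NeZero.ne])
  have hf (x : E) : f x = L x + f 0 := congrFun f.decomp x
  have hf' : (fun x => f (φ x)) = fun x => L (φ x) + f 0 := funext fun x => hf (φ x)
  rw [average_eq', average_eq', hf', hf, integral_add (L.integrable_comp hφ') (integrable_const _),
    L.integral_comp_comm hφ', integral_const, probReal_univ, one_smul]

section AddHaar

variable {E : Type*} [NormedAddCommGroup E] [NormedSpace ℝ E] [FiniteDimensional ℝ E]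
  [MeasurableSpace E] [BorelSpace E] (μ : Measure E) [μ.IsAddHaarMeasure]

theorem AffineMap.measurePreserving_of_involutive (T : E →ᵃ[ℝ] E) (hT : Function.Involutive T) :
    MeasurePreserving T μ μ := by
  have hlin : T.linear ∘ₗ T.linear = LinearMap.id := by
    have hTT : T.comp T = AffineMap.id ℝ E := AffineMap.ext hT
    simpa using congrArg AffineMap.linear hTT
  have hdet : |LinearMap.det T.linear| = 1 := by
    have : LinearMap.det T.linear * LinearMap.det T.linear = 1 := by
      rw [← LinearMap.det_comp, hlin, LinearMap.det_id]
    rcases mul_self_eq_one_iff.1 this with h | h <;> simp [h]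
  have hdet₀ : LinearMap.det T.linear ≠ 0 := by
    rintro h
    simp [h] at hdet
  have hT' : ⇑T = (· + T 0) ∘ T.linear := by
    ext x
    simpa using T.map_vadd 0 x
  refine ⟨T.continuous_of_finiteDimensional.measurable, ?_⟩
  rw [hT', ← Measure.map_map (measurable_add_const _)
    T.linear.continuous_of_finiteDimensional.measurable,
    Measure.map_linearMap_addHaar_eq_smul_addHaar μ hdet₀, abs_inv, hdet, inv_one,
    ENNReal.ofReal_one, one_smul, map_add_right_eq_self]

namespace AffineBasis

variable {ι : Type*} [Fintype ι]

theorem integral_coord_convexHull_eq (b : AffineBasis ι ℝ E) (i j : ι) :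
    ∫ x in convexHull ℝ (range b), b.coord i x ∂μ =
      ∫ x in convexHull ℝ (range b), b.coord j x ∂μ := by
  classical
  obtain ⟨T, hT⟩ := b.exists_affineMap_coord_apply (Equiv.swap i j)
  have hinv : Function.Involutive T := fun x => b.ext_elem fun m => by simp [hT]
  have hpre : T ⁻¹' convexHull ℝ (range b) = convexHull ℝ (range b) := by
    ext x
    simp only [b.convexHull_eq_nonneg_coord, mem_preimage, mem_ofPred_eq, hT]
    exact (Equiv.swap i j).forall_congr_right (q := fun m => 0 ≤ b.coord m x)
  have hmeas : MeasurableSet (convexHull ℝ (range b)) :=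
    (finite_range b).isCompact_convexHull ℝ |>.isClosed.measurableSet
  have hmp := (T.measurePreserving_of_involutive μ hinv).restrict_preimage hmeas
  rw [hpre] at hmp
  calc ∫ x in convexHull ℝ (range b), b.coord i x ∂μ
      = ∫ x in convexHull ℝ (range b), b.coord i (T x) ∂μ :=
        (hmp.integral_comp (MeasurableEquiv.ofInvolutive T hinv
          T.continuous_of_finiteDimensional.measurable).measurableEmbedding _).symm
    _ = ∫ x in convexHull ℝ (range b), b.coord j x ∂μ := by simp [hT]

theorem setAverage_convexHull_eq_centroid (b : AffineBasis ι ℝ E) :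
    ⨍ x in convexHull ℝ (range b), x ∂μ = Finset.univ.centroid ℝ b := by
  classical
  set S := convexHull ℝ (range b)
  have hS : IsCompact S := (finite_range b).isCompact_convexHull ℝ
  have : IsFiniteMeasure (μ.restrict S) := isFiniteMeasure_restrict.2 hS.measure_lt_top.ne
  have : NeZero (μ.restrict S) := ⟨by
    rw [Ne, Measure.restrict_eq_zero]
    exact (Measure.measure_pos_of_nonempty_interior μ
      ⟨_, b.centroid_mem_interior_convexHull⟩).ne'⟩
  have hint (i : ι) : Integrable (b.coord i) (μ.restrict S) :=
    (b.coord i).continuous_of_finiteDimensional.continuousOn.integrableOn_compact hS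
  refine b.ext_elem fun i => ?_
  rw [b.coord_apply_centroid (Finset.mem_univ i), (b.coord i).apply_average (φ := fun x => x)
    (continuous_id.continuousOn.integrableOn_compact hS)]
  have hsum : ∑ j, ⨍ x, b.coord j x ∂(μ.restrict S) = 1 :=
    calc ∑ j, ⨍ x, b.coord j x ∂(μ.restrict S) = ⨍ x, ∑ j, b.coord j x ∂(μ.restrict S) := by
          simp only [average_eq, ← Finset.smul_sum, integral_finsetSum _ fun j _ => hint j]
      _ = 1 := by simp [sum_coord_apply_eq_one, average_const]
  have heq (j : ι) : ⨍ x, b.coord j x ∂(μ.restrict S) = ⨍ x, b.coord i x ∂(μ.restrict S) := by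
    rw [average_eq, average_eq, b.integral_coord_convexHull_eq μ j i]
  rw [Finset.sum_congr rfl fun j _ => heq j, Finset.sum_const, nsmul_eq_mul] at hsum
  exact eq_inv_of_mul_eq_one_right hsum

end AffineBasis

end AddHaar

theorem exists_intCast_eq_sub_of_mem_latticePts {d : ℕ} {x y : Fin d → ℝ}
    (hx : x ∈ latticePts d) (hy : y ∈ latticePts d) :
    ∃ z : Fin d → ℤ, (fun i => (z i : ℝ)) = x - y := by
  choose zx hzx using hx
  choose zy hzy using hy
  exact ⟨zx - zy, funext fun i => by simp [hzx, hzy]⟩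

/-- **Theorem (simplex bound).** If `S ⊆ ℝ^d` is a `d`-simplex with centroid at the
origin and first successive minimum `λ₁`, then
`#(S ∩ ℤ^d) ≤ C(d + ⌈λ₁⁻¹ (d+1)⌉, d)`. -/
theorem simplex_lattice_point_bound (d : ℕ) (v : Fin (d + 1) → (Fin d → ℝ))
    (hv : AffineIndependent ℝ v) (S : Set (Fin d → ℝ))
    (hS : S = convexHull ℝ (Set.range v))
    (hcent : (⨍ x in S, x) = (0 : Fin d → ℝ))
    (l1 : ℝ)
    (hl1 : IsLeast {l : ℝ | 0 < l ∧ ∃ z : Fin d → ℤ,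
      (fun i => (z i : ℝ)) ≠ 0 ∧ (fun i => (z i : ℝ)) ∈ l • S} l1) :
    Set.ncard (S ∩ latticePts d) ≤ (d + ⌈l1⁻¹ * ((d : ℝ) + 1)⌉₊).choose d := by
  let b : AffineBasis (Fin (d + 1)) ℝ (Fin d → ℝ) :=
    ⟨v, hv, hv.affineSpan_eq_top_iff_card_eq_finrank_add_one.2 (by simp)⟩
  have hb : S = convexHull ℝ (range b) := hS
  have hcoord₀ (i : Fin (d + 1)) : b.coord i 0 = ((d : ℝ) + 1)⁻¹ := by
    rw [← hcent, hb, b.setAverage_convexHull_eq_centroid volume,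
      b.coord_apply_centroid (Finset.mem_univ i)]
    simp
  have hd : (0 : ℝ) < ((d : ℝ) + 1)⁻¹ := by positivity
  have hsep : ∀ x ∈ S ∩ latticePts d, ∀ y ∈ S ∩ latticePts d, x ≠ y →
      ∃ i, ((d : ℝ) + 1)⁻¹ * l1 ≤ b.coord i y - b.coord i x := by
    rintro x ⟨-, hx⟩ y ⟨-, hy⟩ hxy
    refine b.exists_le_coord_sub hd (fun i => (hcoord₀ i).ge) hxy fun t ht hmem => hl1.2 ⟨ht, ?_⟩
    obtain ⟨z, hz⟩ := exists_intCast_eq_sub_of_mem_latticePts hx hy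
    exact ⟨z, hz ▸ sub_ne_zero.2 hxy, hz ▸ hb ▸ hmem⟩
  have hnonneg : ∀ x ∈ S ∩ latticePts d, ∀ i, 0 ≤ b.coord i x := by
    rintro x ⟨hx, -⟩
    rwa [hb, b.convexHull_eq_nonneg_coord] at hx
  have := ncard_le_choose_of_separated (fun x i => b.coord i x) (mul_pos hd hl1.1.1) hnonneg
    (fun x _ => b.sum_coord_apply_eq_one x) hsep
  rwa [mul_inv_rev, inv_inv] at this
end

section
/- Fix d ≥ 1 and a real number ρ > 0, and set n(ρ) = ⌈ρ⁻¹(d+1)⌉. Let B = {x ∈ ℝ^{d+1} : x_i ≥ 0 for all i, Σ_{i=1}^{d+1} x_i = 1} and R_ρ = (1/n(ρ))·{a ∈ ℤ^{d+1} : a_i ≥ 0 for all i, Σ_{i=1}^{d+1} a_i = n(ρ)}. Then for every x ∈ B there exists r ∈ R_ρ such that r_i ≤ x_i < r_i + 1/n(ρ) for all i = 1, …, d (equivalently, B ⊆ R_ρ + Z_ρ where Z_ρ = [0, 1/n(ρ))^d × ℝ). -/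
/-!
Round the first `d` coordinates of `n • x` down, `aᵢ = ⌊n xᵢ⌋`, and let the last coordinate
absorb the remainder `n - ∑ᵢ ⌊n xᵢ⌋`. It is nonnegative because the floors sum to at most
`n ∑_{i ≤ d} xᵢ ≤ n`; the cylinder condition is the defining property of the floor.
-/

open Finset

theorem Int.floor_mul_div_mem_Ico {n : ℝ} (hn : 0 < n) (t : ℝ) :
    t ∈ Set.Ico ((⌊n * t⌋ : ℝ) / n) ((⌊n * t⌋ : ℝ) / n + 1 / n) := by
  rw [← add_div, Set.mem_Ico, div_le_iff₀ hn, lt_div_iff₀ hn, mul_comm t]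
  exact ⟨Int.floor_le _, Int.lt_floor_add_one _⟩

theorem sum_floor_mul_le_of_sum_le_one {ι : Type*} [Fintype ι] {n : ℝ} (hn : 0 ≤ n)
    {y : ι → ℝ} (hy : ∑ i, y i ≤ 1) : ((∑ i, ⌊n * y i⌋ : ℤ) : ℝ) ≤ n :=
  calc ((∑ i, ⌊n * y i⌋ : ℤ) : ℝ) ≤ ∑ i, n * y i := by
        push_cast
        exact sum_le_sum fun i _ => Int.floor_le _
    _ = n * ∑ i, y i := (mul_sum _ _ _).symm
    _ ≤ n := mul_le_of_le_one_right hn hy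

theorem exists_nonneg_sum_eq_snoc_floor {d : ℕ} (n : ℕ) {y : Fin d → ℝ} (hy0 : ∀ j, 0 ≤ y j)
    (hy1 : ∑ j, y j ≤ 1) :
    ∃ a : Fin (d + 1) → ℤ, (∀ i, 0 ≤ a i) ∧ ∑ i, a i = n ∧
      ∀ j, a j.castSucc = ⌊(n : ℝ) * y j⌋ := by
  set S := ∑ j, ⌊(n : ℝ) * y j⌋
  have hS : S ≤ n := by exact_mod_cast sum_floor_mul_le_of_sum_le_one n.cast_nonneg hy1
  refine ⟨Fin.snoc (fun j => ⌊(n : ℝ) * y j⌋) (n - S), fun i => ?_, ?_, fun j => ?_⟩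
  · induction i using Fin.lastCases with
    | last => simpa only [Fin.snoc_last] using sub_nonneg.2 hS
    | cast j =>
      simpa only [Fin.snoc_castSucc] using Int.floor_nonneg.2 (mul_nonneg n.cast_nonneg (hy0 j))
  · simp only [Fin.sum_univ_castSucc, Fin.snoc_castSucc, Fin.snoc_last, S]
    ring
  · exact Fin.snoc_castSucc ..

theorem simplex_covered_by_cylinders_general (d : ℕ) (ρ : ℝ) (hρ : 0 < ρ)
    (n : ℕ) (hn : n = ⌈ρ⁻¹ * ((d : ℝ) + 1)⌉₊)
    (x : Fin (d + 1) → ℝ) (hx0 : ∀ i, 0 ≤ x i) (hx1 : ∑ i, x i = 1) :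
    ∃ a : Fin (d + 1) → ℤ, (∀ i, 0 ≤ a i) ∧ (∑ i, a i = (n : ℤ)) ∧
      ∀ i : Fin d, (a i.castSucc : ℝ) / n ≤ x i.castSucc ∧
        x i.castSucc < (a i.castSucc : ℝ) / n + 1 / n := by
  have hn_pos : (0 : ℝ) < n := by
    rw [hn]
    exact_mod_cast Nat.ceil_pos.2 (by positivity)
  have hsum : ∑ j : Fin d, x j.castSucc ≤ 1 := by
    rw [Fin.sum_univ_castSucc] at hx1
    linarith [hx0 (Fin.last d)]
  obtain ⟨a, ha0, ha_sum, ha_floor⟩ := exists_nonneg_sum_eq_snoc_floor n (fun j => hx0 _) hsum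
  refine ⟨a, ha0, ha_sum, fun i => ?_⟩
  rw [ha_floor]
  exact Int.floor_mul_div_mem_Ico hn_pos _

/-- **Covering lemma.** Fix `d ≥ 1`, `ρ > 0` and set `n = ⌈ρ⁻¹ (d+1)⌉`. For every point
`x` of the standard simplex `B = {x ∈ ℝ^{d+1} : x ≥ 0, ∑ xᵢ = 1}` there is a nonnegative
integer vector `a` with `∑ aᵢ = n` such that `aᵢ/n ≤ xᵢ < aᵢ/n + 1/n` for the first `d`
coordinates (i.e. `B ⊆ R_ρ + Z_ρ` where `Z_ρ = [0, 1/n)^d × ℝ`). -/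
theorem simplex_covered_by_cylinders (d : ℕ) (hd : 1 ≤ d) (ρ : ℝ) (hρ : 0 < ρ)
    (n : ℕ) (hn : n = ⌈ρ⁻¹ * ((d : ℝ) + 1)⌉₊)
    (x : Fin (d + 1) → ℝ) (hx0 : ∀ i, 0 ≤ x i) (hx1 : ∑ i, x i = 1) :
    ∃ a : Fin (d + 1) → ℤ, (∀ i, 0 ≤ a i) ∧ (∑ i, a i = (n : ℤ)) ∧
      ∀ i : Fin d, (a i.castSucc : ℝ) / n ≤ x i.castSucc ∧
        x i.castSucc < (a i.castSucc : ℝ) / n + 1 / n :=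
  simplex_covered_by_cylinders_general d ρ hρ n hn x hx0 hx1
end

section
/- Let K be a convex body in ℝ^d with 0 in its interior and let λ₁ = λ₁(K) be its first successive minimum. Then #(K ∩ ℤ^d) ≤ (2/λ₁ + 1)^d · vol(K)/vol(K ∩ −K). -/
/-!
With `B = interior (K ∩ -K)` and `c = λ₁ / 2`, the translates `x + c • B` over the lattice points
`x ∈ K` are pairwise disjoint: `c • B - c • B = λ₁ • B`, and `λ₁ • interior K` contains no nonzero
lattice point by minimality of `λ₁`. They all lie in `K + c • K = (1 + c) • K`, so comparing
volumes gives `#(K ∩ ℤ^d) · c^d · vol(K ∩ -K) ≤ (1 + c)^d · vol K`, and `(1 + c) / c = 2 / λ₁ + 1`.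
-/

open MeasureTheory Set Pointwise

theorem neg_interior {E : Type*} [TopologicalSpace E] [AddGroup E] [IsTopologicalAddGroup E]
    (s : Set E) : -interior s = interior (-s) := by
  simpa using (Homeomorph.neg E).image_interior s

theorem exists_one_lt_smul_mem_of_mem_interior {E : Type*} [AddCommGroup E] [Module ℝ E]
    [TopologicalSpace E] [ContinuousSMul ℝ E] {s : Set E} {x : E} (hx : x ∈ interior s) :
    ∃ t : ℝ, 1 < t ∧ t • x ∈ s := by
  have hcont : Filter.Tendsto (fun t : ℝ => t • x) (nhds 1) (nhds x) :=
    (continuous_id.smul continuous_const).tendsto' 1 x (one_smul ℝ x)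
  obtain ⟨t, hxt, ht⟩ := ((hcont.eventually (mem_interior_iff_mem_nhds.1 hx)).filter_mono
    nhdsWithin_le_nhds |>.and (self_mem_nhdsWithin (s := Ioi 1))).exists
  exact ⟨t, ht, hxt⟩

theorem Convex.smul_sub_smul_self_of_neg_eq {E : Type*} [AddCommGroup E] [Module ℝ E]
    {B : Set E} (hB : Convex ℝ B) (hsymm : -B = B) {c : ℝ} (hc : 0 ≤ c) :
    c • B - c • B = (2 * c) • B := by
  rw [sub_eq_add_neg, ← smul_set_neg, hsymm, two_mul, hB.add_smul hc hc]

theorem Convex.vadd_smul_subset_one_add_smul {E : Type*} [AddCommGroup E] [Module ℝ E]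
    {K : Set E} (hK : Convex ℝ K) {x : E} (hx : x ∈ K) {c : ℝ} (hc : 0 ≤ c) :
    x +ᵥ c • K ⊆ (1 + c) • K := by
  rw [hK.add_smul zero_le_one hc, one_smul, ← singleton_vadd]
  exact add_subset_add_right (singleton_subset_iff.2 hx)

theorem Set.pairwiseDisjoint_vadd_of_sub_notMem_sub {G : Type*} [AddCommGroup G] {S U : Set G}
    (h : ∀ x ∈ S, ∀ y ∈ S, x ≠ y → x - y ∉ U - U) : S.PairwiseDisjoint (· +ᵥ U) := by
  intro x hx y hy hxy
  refine disjoint_left.2 ?_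
  rintro _ ⟨a, ha, rfl⟩ ⟨b, hb, hab⟩
  refine h x hx y hy hxy ⟨b, hb, a, ha, ?_⟩
  simp only [vadd_eq_add] at hab
  rw [sub_eq_sub_iff_add_eq_add, add_comm, hab]

theorem ncard_mul_measure_le_of_pairwiseDisjoint_vadd {G : Type*} [AddGroup G]
    [MeasurableSpace G] [MeasurableAdd G] (μ : Measure G) [μ.IsAddLeftInvariant] {S U T : Set G}
    (hU : MeasurableSet U) (hdisj : S.PairwiseDisjoint (· +ᵥ U)) (hT : ∀ x ∈ S, x +ᵥ U ⊆ T) :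
    S.ncard * μ U ≤ μ T := by
  rcases S.finite_or_infinite with hS | hS
  · lift S to Finset G using hS
    calc ((S : Set G).ncard : ENNReal) * μ U = ∑ x ∈ S, μ (x +ᵥ U) := by simp [measure_vadd]
      _ = μ (⋃ x ∈ S, x +ᵥ U) := (measure_biUnion_finset hdisj fun x _ => hU.const_vadd x).symm
      _ ≤ μ T := measure_mono (iUnion₂_subset hT)
  · simp [hS.ncard]

theorem latticePts_eq_range (d : ℕ) :
    latticePts d = range fun (z : Fin d → ℤ) i => (z i : ℝ) := by
  ext x
  simp only [latticePts, mem_ofPred_eq, mem_range, funext_iff, eq_comm (a := x _)]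
  exact Classical.skolem

theorem sub_mem_latticePts {d : ℕ} {x y : Fin d → ℝ} (hx : x ∈ latticePts d)
    (hy : y ∈ latticePts d) : x - y ∈ latticePts d := fun i => by
  obtain ⟨a, ha⟩ := hx i
  obtain ⟨b, hb⟩ := hy i
  exact ⟨a - b, by simp [ha, hb]⟩

theorem notMem_smul_interior_of_mem_lowerBounds {d : ℕ} {K : Set (Fin d → ℝ)} {l1 : ℝ}
    (hl1 : l1 ∈ lowerBounds {l : ℝ | 0 < l ∧ ∃ z : Fin d → ℤ,
      (fun i => (z i : ℝ)) ≠ 0 ∧ (fun i => (z i : ℝ)) ∈ l • K})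
    (hpos : 0 < l1) {x : Fin d → ℝ} (hx : x ∈ latticePts d) (hx0 : x ≠ 0) :
    x ∉ l1 • interior K := by
  obtain ⟨z, rfl⟩ := (latticePts_eq_range d).subset hx
  rintro ⟨w, hw, hwz⟩
  obtain ⟨t, ht, htw⟩ := exists_one_lt_smul_mem_of_mem_interior hw
  have hzK : (fun i => (z i : ℝ)) ∈ (l1 / t) • K :=
    ⟨t • w, htw, by dsimp only; rw [smul_smul, div_mul_cancel₀ _ (by positivity)]; exact hwz⟩
  exact (div_lt_self hpos ht).not_ge (hl1 ⟨by positivity, z, hx0, hzK⟩)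

theorem ncard_inter_latticePts_mul_volume_le {d : ℕ} {K : Set (Fin d → ℝ)} (hKconv : Convex ℝ K)
    {l1 : ℝ} (hl1 : l1 ∈ lowerBounds {l : ℝ | 0 < l ∧ ∃ z : Fin d → ℤ,
      (fun i => (z i : ℝ)) ≠ 0 ∧ (fun i => (z i : ℝ)) ∈ l • K})
    (hpos : 0 < l1) :
    (K ∩ latticePts d).ncard * (ENNReal.ofReal ((l1 / 2) ^ d) * volume (K ∩ -K)) ≤
      ENNReal.ofReal ((1 + l1 / 2) ^ d) * volume K := by
  set B := interior (K ∩ -K)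
  set c := l1 / 2
  have hc : 0 < c := by positivity
  have hBconv : Convex ℝ B := (hKconv.inter hKconv.neg).interior
  have hBK : B ⊆ interior K := interior_mono inter_subset_left
  have hBsymm : -B = B := by rw [neg_interior, inter_neg, neg_neg, inter_comm]
  have hdisj : (K ∩ latticePts d).PairwiseDisjoint (· +ᵥ c • B) := by
    refine pairwiseDisjoint_vadd_of_sub_notMem_sub fun x hx y hy hxy hsub => ?_
    rw [hBconv.smul_sub_smul_self_of_neg_eq hBsymm hc.le, mul_div_cancel₀ _ two_ne_zero] at hsub
    exact notMem_smul_interior_of_mem_lowerBounds hl1 hpos (sub_mem_latticePts hx.2 hy.2)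
      (sub_ne_zero.2 hxy) (smul_set_mono hBK hsub)
  have hcount := ncard_mul_measure_le_of_pairwiseDisjoint_vadd volume
    (isOpen_interior.smul₀ hc.ne').measurableSet hdisj fun x hx =>
      (vadd_set_mono (smul_set_mono (hBK.trans interior_subset))).trans
        (hKconv.vadd_smul_subset_one_add_smul hx.1 hc.le)
  rwa [Measure.addHaar_smul_of_nonneg _ hc.le, Measure.addHaar_smul_of_nonneg _ (by positivity),
    Module.finrank_fin_fun,
    measure_interior_of_null_frontier ((hKconv.inter hKconv.neg).addHaar_frontier volume)]
    at hcount

/-- **Volume bound for the number of lattice points.** Let `K ⊆ ℝ^d` be a convex body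
with `0` in its interior and first successive minimum `λ₁`. Then
`#(K ∩ ℤ^d) ≤ (2/λ₁ + 1)^d · vol(K) / vol(K ∩ -K)`. -/
theorem lattice_points_le_volume_ratio (d : ℕ) (K : Set (Fin d → ℝ))
    (hKcpt : IsCompact K) (hKconv : Convex ℝ K) (h0 : (0 : Fin d → ℝ) ∈ interior K)
    (l1 : ℝ)
    (hl1 : IsLeast {l : ℝ | 0 < l ∧ ∃ z : Fin d → ℤ,
      (fun i => (z i : ℝ)) ≠ 0 ∧ (fun i => (z i : ℝ)) ∈ l • K} l1) :
    (Set.ncard (K ∩ latticePts d) : ℝ) ≤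
      (2 / l1 + 1) ^ d * (volume K).toReal / (volume (K ∩ -K)).toReal := by
  obtain ⟨⟨hl1pos, -⟩, hl1le⟩ := hl1
  have hL0 : (0 : Fin d → ℝ) ∈ interior (K ∩ -K) := by
    rw [interior_inter, ← neg_interior]
    exact ⟨h0, by simpa using h0⟩
  have hLpos : 0 < (volume (K ∩ -K)).toReal :=
    ENNReal.toReal_pos (Measure.measure_pos_of_nonempty_interior _ ⟨0, hL0⟩).ne'
      (hKcpt.inter_right hKcpt.neg.isClosed).measure_ne_top
  have hpacking := ENNReal.toReal_mono (ENNReal.mul_ne_top ENNReal.ofReal_ne_top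
    hKcpt.measure_ne_top) (ncard_inter_latticePts_mul_volume_le hKconv hl1le hl1pos)
  set c := l1 / 2
  simp only [ENNReal.toReal_mul, ENNReal.toReal_natCast,
    ENNReal.toReal_ofReal (by positivity : 0 ≤ c ^ d),
    ENNReal.toReal_ofReal (by positivity : 0 ≤ (1 + c) ^ d)] at hpacking
  have hratio : 2 / l1 + 1 = (1 + c) / c := by simp only [c]; field_simp
  rw [le_div_iff₀ hLpos, hratio, div_pow, div_mul_eq_mul_div, le_div_iff₀ (by positivity)]
  linarith
end

section
/- Let K be a convex body in ℝ^d with 0 in its interior and let λ₁(K) be its first successive minimum. Suppose that for every positive integer m the dilate mK satisfies #(mK ∩ ℤ^d) ≤ C(d + ⌈λ₁(mK)⁻¹(d+1)⌉, d). Then vol(K) ≤ λ₁(K)^{−d} · (d+1)^d / d!. In particular, if int(K) ∩ ℤ^d = {0}, then vol(K) ≤ (d+1)^d / d!. -/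
open MeasureTheory Set Pointwise
open scoped ENNReal NNReal

lemma latticeFinite (d : ℕ) {s : Set (Fin d → ℝ)} (hs : Bornology.IsBounded s) :
    (s ∩ latticePts d).Finite := by
  obtain ⟨R, hR⟩ := (isBounded_iff_forall_norm_le).mp hs
  have hfin : ({z : Fin d → ℤ | ∀ i, z i ∈ Set.Icc (-⌈R⌉) ⌈R⌉}).Finite := by
    have := Set.Finite.pi (fun _ : Fin d => Set.finite_Icc (-⌈R⌉) ⌈R⌉)
    refine this.subset ?_
    intro z hz
    simp only [Set.mem_pi, Set.mem_univ, forall_true_left]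
    exact hz
  refine ((hfin.image (fun z : Fin d → ℤ => fun i => (z i : ℝ)))).subset ?_
  rintro x ⟨hxs, hxl⟩
  choose z hz using hxl
  refine ⟨z, fun i => ?_, by funext i; exact (hz i).symm⟩
  have h1 : |x i| ≤ R := (norm_le_pi_norm x i).trans (hR x hxs)
  rw [hz i] at h1
  rw [abs_le] at h1
  constructor
  · have : -(⌈R⌉ : ℝ) ≤ (z i : ℝ) := le_trans (by linarith [Int.le_ceil R]) h1.1
    exact_mod_cast this
  · have : (z i : ℝ) ≤ (⌈R⌉ : ℝ) := h1.2.trans (Int.le_ceil R)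
    exact_mod_cast this

lemma smul_subset_smul_of_le {d : ℕ} {K : Set (Fin d → ℝ)} (hK : Convex ℝ K)
    (h0 : (0 : Fin d → ℝ) ∈ K) {a b : ℝ} (ha : 0 ≤ a) (hb : 0 < b) (hab : a ≤ b) :
    a • K ⊆ b • K := by
  rintro x ⟨k, hk, rfl⟩
  refine ⟨(a / b) • k, (hK.starConvex h0).smul_mem hk (by positivity)
    (div_le_one_of_le₀ hab hb.le), ?_⟩
  show b • ((a / b) • k) = a • k
  rw [smul_smul, mul_div_cancel₀ _ hb.ne']

/-- **From the conjectured lattice point bound to Ehrhart's volume conjecture.**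
Let `K ⊆ ℝ^d` be a convex body with `0` in its interior and first successive minimum
`λ₁`. Suppose that for every positive integer `m` we have
`#(mK ∩ ℤ^d) ≤ C(d + ⌈λ₁(mK)⁻¹ (d+1)⌉, d)`, where `λ₁(mK) = λ₁/m`. Then
`vol(K) ≤ λ₁^{-d} (d+1)^d / d!`; in particular, if the origin is the only interior
lattice point of `K`, then `vol(K) ≤ (d+1)^d / d!`. -/
theorem volume_bound_from_lattice_point_bound (d : ℕ) (K : Set (Fin d → ℝ))
    (hKcpt : IsCompact K) (hKconv : Convex ℝ K) (h0 : (0 : Fin d → ℝ) ∈ interior K)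
    (l1 : ℝ)
    (hl1 : IsLeast {l : ℝ | 0 < l ∧ ∃ z : Fin d → ℤ,
      (fun i => (z i : ℝ)) ≠ 0 ∧ (fun i => (z i : ℝ)) ∈ l • K} l1)
    (hbound : ∀ m : ℕ, 0 < m →
      Set.ncard (((m : ℝ) • K) ∩ latticePts d)
        ≤ (d + ⌈(l1 / m)⁻¹ * ((d : ℝ) + 1)⌉₊).choose d) :
    (volume K).toReal ≤ l1⁻¹ ^ d * ((d : ℝ) + 1) ^ d / (d.factorial : ℝ) ∧
    (interior K ∩ latticePts d = {0} →
      (volume K).toReal ≤ ((d : ℝ) + 1) ^ d / (d.factorial : ℝ)) := by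
  have hl1pos : 0 < l1 := hl1.1.1
  have h0K : (0 : Fin d → ℝ) ∈ K := interior_subset h0
  set vK := (volume K).toReal with hvK
  have hvKfin : volume K ≠ ⊤ := hKcpt.measure_lt_top.ne
  obtain ⟨ε, hε, hball⟩ := Metric.mem_nhds_iff.mp (mem_interior_iff_mem_nhds.mp h0)
  set c : ℝ := 2 / ε with hc
  have hcpos : 0 < c := by positivity
  have hcube : ∀ y : Fin d → ℝ, ‖y‖ ≤ 1 → y ∈ c • K := by
    intro y hy
    refine ⟨(ε / 2) • y, hball ?_, ?_⟩
    · rw [Metric.mem_ball, dist_zero_right, norm_smul]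
      calc ‖ε / 2‖ * ‖y‖ ≤ (ε / 2) * 1 := by
            apply mul_le_mul _ hy (norm_nonneg _) (by positivity)
            rw [Real.norm_eq_abs, abs_of_pos (by positivity)]
          _ < ε := by linarith
    · show c • ((ε / 2) • y) = y
      rw [smul_smul, hc]
      rw [show 2 / ε * (ε / 2) = 1 by field_simp]
      rw [one_smul]
  set a : ℝ := ((d : ℝ) + 1) / l1 with ha
  set b : ℝ := ((d : ℝ) + 1) + (c + 1) * ((d : ℝ) + 1) / l1 with hb
  have hapos : 0 < a := by positivity
  have hbpos : 0 < b := by positivity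
  have key : ∀ m : ℕ, 1 ≤ m → vK ≤ (a + b / (m : ℝ)) ^ d / (d.factorial : ℝ) := by
    intro m hm
    have hmpos : (0 : ℝ) < m := by exact_mod_cast hm
    set M : ℕ := ⌈(m : ℝ) + c⌉₊ with hM
    have hMpos : 0 < M := Nat.ceil_pos.mpr (by positivity)
    have hMge : (m : ℝ) + c ≤ (M : ℝ) := Nat.le_ceil _
    have hMle : (M : ℝ) ≤ (m : ℝ) + c + 1 := le_of_lt (Nat.ceil_lt_add_one (by positivity))
    set S : Set (Fin d → ℝ) := ((M : ℝ) • K) ∩ latticePts d with hS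
    have hSfin : S.Finite :=
      latticeFinite d ((hKcpt.isBounded).smul₀ (M : ℝ))
    -- covering
    have cover : (m : ℝ) • K ⊆
        ⋃ z ∈ hSfin.toFinset, Set.pi Set.univ (fun i => Set.Ico (z i) (z i + 1)) := by
      intro x hx
      set z : Fin d → ℝ := fun i => ((⌊x i⌋ : ℤ) : ℝ) with hz
      have hzlat : z ∈ latticePts d := fun i => ⟨⌊x i⌋, rfl⟩
      have hzsub : z - x ∈ c • K := by
        apply hcube
        rw [pi_norm_le_iff_of_nonneg zero_le_one]
        intro i
        rw [Real.norm_eq_abs, abs_le]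
        constructor
        · simp only [Pi.sub_apply, hz]
          have := Int.floor_le (x i)
          have := Int.lt_floor_add_one (x i)
          push_cast at *
          linarith
        · simp only [Pi.sub_apply, hz]
          have := Int.floor_le (x i)
          linarith
      have hzmem : z ∈ (M : ℝ) • K := by
        have h1 : z ∈ (m : ℝ) • K + c • K := by
          have : z = x + (z - x) := by abel
          rw [this]
          exact Set.add_mem_add hx hzsub
        rw [← hKconv.add_smul (by positivity) hcpos.le] at h1
        exact smul_subset_smul_of_le hKconv h0K (by positivity)
          (lt_of_lt_of_le (by positivity) hMge) hMge h1
      refine Set.mem_biUnion (hSfin.mem_toFinset.mpr ⟨hzmem, hzlat⟩) ?_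
      rw [Set.mem_univ_pi]
      exact fun i => ⟨Int.floor_le (x i), Int.lt_floor_add_one (x i)⟩
    -- volume estimate
    have hvol1 : volume ((m : ℝ) • K) ≤ (hSfin.toFinset.card : ℝ≥0∞) := by
      calc volume ((m : ℝ) • K)
          ≤ volume (⋃ z ∈ hSfin.toFinset,
              Set.pi Set.univ (fun i => Set.Ico (z i) (z i + 1))) := measure_mono cover
        _ ≤ ∑ z ∈ hSfin.toFinset,
              volume (Set.pi Set.univ (fun i => Set.Ico (z i) (z i + 1))) :=
            measure_biUnion_finset_le _ _
        _ = (hSfin.toFinset.card : ℝ≥0∞) := by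
            have hone : ∀ z : Fin d → ℝ,
                volume (Set.pi Set.univ (fun i => Set.Ico (z i) (z i + 1))) = 1 := by
              intro z
              rw [volume_pi_pi]
              simp [Real.volume_Ico]
            simp [hone]
    have hvol2 : volume ((m : ℝ) • K) = ENNReal.ofReal ((m : ℝ) ^ d) * volume K := by
      have hfr : Module.finrank ℝ (Fin d → ℝ) = d := by
        simp [Module.finrank_pi]
      rw [Measure.addHaar_smul, hfr, abs_of_nonneg (by positivity : (0:ℝ) ≤ (m:ℝ) ^ d)]
    have hcard : S.ncard = hSfin.toFinset.card := Set.ncard_eq_toFinset_card _ hSfin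
    -- real inequality: m^d * vK ≤ card
    have hreal : (m : ℝ) ^ d * vK ≤ (S.ncard : ℝ) := by
      rw [hcard]
      have := hvol1
      rw [hvol2] at this
      have h2 := ENNReal.toReal_mono (by simp) this
      rw [ENNReal.toReal_mul, ENNReal.toReal_ofReal (by positivity)] at h2
      simpa using h2
    -- combinatorial bound
    set N : ℕ := ⌈(l1 / M)⁻¹ * ((d : ℝ) + 1)⌉₊ with hN
    have hchoose : ((d + N).choose d : ℝ) ≤ ((d : ℝ) + N) ^ d / (d.factorial : ℝ) := by
      rw [le_div_iff₀ (by positivity)]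
      have hnat : d.factorial * (d + N).choose d ≤ (d + N) ^ d := by
        rw [← Nat.descFactorial_eq_factorial_mul_choose]
        exact Nat.descFactorial_le_pow _ _
      calc ((d + N).choose d : ℝ) * (d.factorial : ℝ)
          = ((d.factorial * (d + N).choose d : ℕ) : ℝ) := by push_cast; ring
        _ ≤ (((d + N) ^ d : ℕ) : ℝ) := by exact_mod_cast hnat
        _ = ((d : ℝ) + N) ^ d := by push_cast; ring
    have hNle : (N : ℝ) ≤ (M : ℝ) * ((d : ℝ) + 1) / l1 + 1 := by
      have h1 : (l1 / M)⁻¹ * ((d : ℝ) + 1) = (M : ℝ) * ((d : ℝ) + 1) / l1 := by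
        field_simp
      have h2 : (N : ℝ) < (l1 / M)⁻¹ * ((d : ℝ) + 1) + 1 := by
        apply Nat.ceil_lt_add_one
        have hMpos' : (0 : ℝ) < M := by exact_mod_cast hMpos
        positivity
      rw [h1] at h2
      linarith
    have hdN : (d : ℝ) + N ≤ a * m + b := by
      have hMub : (M : ℝ) * ((d : ℝ) + 1) / l1 ≤ ((m : ℝ) + c + 1) * ((d : ℝ) + 1) / l1 := by
        gcongr
      have : a * m + b = (m : ℝ) * ((d : ℝ) + 1) / l1 + (c + 1) * ((d : ℝ) + 1) / l1
          + ((d : ℝ) + 1) := by rw [ha, hb]; ring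
      rw [this]
      have hexp : ((m : ℝ) + c + 1) * ((d : ℝ) + 1) / l1
          = (m : ℝ) * ((d : ℝ) + 1) / l1 + (c + 1) * ((d : ℝ) + 1) / l1 := by ring
      nlinarith [hNle, hMub]
    have hfinal : (S.ncard : ℝ) ≤ (a * m + b) ^ d / (d.factorial : ℝ) := by
      calc (S.ncard : ℝ) ≤ ((d + N).choose d : ℝ) := Nat.cast_le.mpr (hbound M hMpos)
        _ ≤ ((d : ℝ) + N) ^ d / (d.factorial : ℝ) := hchoose
        _ ≤ (a * m + b) ^ d / (d.factorial : ℝ) := by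
            gcongr <;> first
              | exact hdN
              | positivity
    -- conclude
    have h3 : (m : ℝ) ^ d * vK ≤ (a * m + b) ^ d / (d.factorial : ℝ) := hreal.trans hfinal
    have h4 : (a + b / m) ^ d = (a * m + b) ^ d / (m : ℝ) ^ d := by
      rw [← div_pow]
      congr 1
      field_simp
    calc vK = ((m : ℝ) ^ d * vK) / (m : ℝ) ^ d := by field_simp
      _ ≤ ((a * m + b) ^ d / (d.factorial : ℝ)) / (m : ℝ) ^ d := by gcongr
      _ = (a + b / m) ^ d / (d.factorial : ℝ) := by rw [h4]; ring
  -- limit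
  have hlim : Filter.Tendsto (fun m : ℕ => (a + b / (m : ℝ)) ^ d / (d.factorial : ℝ))
      Filter.atTop (nhds (a ^ d / (d.factorial : ℝ))) := by
    have h1 : Filter.Tendsto (fun m : ℕ => a + b / (m : ℝ)) Filter.atTop (nhds a) := by
      have := tendsto_const_div_atTop_nhds_zero_nat b
      simpa using Filter.Tendsto.add (tendsto_const_nhds (x := a)) this
    exact (h1.pow d).div_const _
  have part1 : vK ≤ l1⁻¹ ^ d * ((d : ℝ) + 1) ^ d / (d.factorial : ℝ) := by
    have h5 : vK ≤ a ^ d / (d.factorial : ℝ) :=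
      ge_of_tendsto hlim (Filter.eventually_atTop.mpr ⟨1, fun m hm => key m hm⟩)
    have : a ^ d = l1⁻¹ ^ d * ((d : ℝ) + 1) ^ d := by
      rw [ha, div_pow, inv_pow]
      field_simp
    rw [this] at h5
    exact h5
  refine ⟨part1, fun hint => ?_⟩
  have hl1ge1 : 1 ≤ l1 := by
    by_contra h
    push_neg at h
    obtain ⟨z, hz0, hzm⟩ := hl1.1.2
    obtain ⟨k, hk, hzk⟩ := hzm
    have hin : l1 • k ∈ interior K := by
      have h2 := hKconv.combo_interior_closure_mem_interior h0 (subset_closure hk)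
        (a := 1 - l1) (b := l1) (by linarith) hl1pos.le (by ring)
      simpa using h2
    have hin2 : (fun i => (z i : ℝ)) ∈ interior K := by
      rw [← hzk]; exact hin
    have : (fun i => (z i : ℝ)) ∈ interior K ∩ latticePts d :=
      ⟨hin2, fun i => ⟨z i, rfl⟩⟩
    rw [hint] at this
    exact hz0 this
  have hinv : l1⁻¹ ^ d ≤ 1 := pow_le_one₀ (by positivity) (inv_le_one_of_one_le₀ hl1ge1)
  calc vK ≤ l1⁻¹ ^ d * ((d : ℝ) + 1) ^ d / (d.factorial : ℝ) := part1
    _ ≤ 1 * ((d : ℝ) + 1) ^ d / (d.factorial : ℝ) := by gcongr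
    _ = ((d : ℝ) + 1) ^ d / (d.factorial : ℝ) := by rw [one_mul]
end
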